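/- arXiv:2309.07375 — 3 statements merged into one kernel-verified Lean document; each statement's English description precedes it below -/
import Mathlib

section
/- Let F: ℝ^N → ℝ^N be continuously differentiable with F(z̄) = 0, and let J: ℝ^N → ℝ^{N×N} be such that J(z) is invertible on an open ball B around z̄, with constants ω < ∞ and κ < 1 satisfying ‖J(z)⁻¹(F'(z) − F'(z'))‖ ≤ ω‖z − z'‖ and ‖J(z)⁻¹(F'(z) − J(z))‖ ≤ κ for all z, z' ∈ B. Then the Newton-type iterate z⁺ := z − J(z)⁻¹ F(z) satisfies ‖z⁺ − z̄‖ ≤ κ‖z − z̄‖ + (ω/2)‖z − z̄‖² for every z ∈ B. -/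
/-!
Since `F z̄ = 0`, the error of the step splits as
`z⁺ - z̄ = -J(z)⁻¹ (F'(z) - J(z)) (z - z̄) - J(z)⁻¹ (F z - F z̄ - F'(z) (z - z̄))`.
The first term is at most `κ ‖z - z̄‖`. The second is the first-order Taylor remainder of
`J(z)⁻¹ ∘ F` on the segment `[z̄, z] ⊆ B`, along which the derivative of `J(z)⁻¹ ∘ F` deviates from
its value at `z` by at most `ω` times the distance to `z`. So along `t ↦ z̄ + t (z - z̄)` the
remainder grows no faster than `ω ‖z - z̄‖² (t - t² / 2)`, which is `(ω / 2) ‖z - z̄‖²` at `t = 1`.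
-/

open Metric Set

section

variable {E G : Type*} [NormedAddCommGroup E] [NormedSpace ℝ E]
  [NormedAddCommGroup G] [NormedSpace ℝ G]

theorem norm_image_sub_sub_le_of_lipschitz_fderiv_segment {f : E → G} {f' : E → E →L[ℝ] G}
    {x y : E} {L : ℝ} (hf : ∀ w ∈ segment ℝ x y, HasFDerivAt f (f' w) w)
    (hL : ∀ w ∈ segment ℝ x y, ‖f' y - f' w‖ ≤ L * ‖y - w‖) :
    ‖f y - f x - f' y (y - x)‖ ≤ L / 2 * ‖y - x‖ ^ 2 := by
  set v := y - x
  have hseg : ∀ t ∈ Icc (0 : ℝ) 1, x + t • v ∈ segment ℝ x y := fun t ht =>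
    segment_eq_image' ℝ x y ▸ mem_image_of_mem _ ht
  let g : ℝ → G := fun t => f (x + t • v) - f x - t • f' y v
  let g' : ℝ → G := fun t => f' (x + t • v) v - f' y v
  have hg : ∀ t ∈ Icc (0 : ℝ) 1, HasDerivAt g (g' t) t := fun t ht => by
    have hline : HasDerivAt (fun s : ℝ => x + s • v) v t := by
      simpa using ((hasDerivAt_id t).smul_const v).const_add x
    exact (((hf _ (hseg t ht)).comp_hasDerivAt t hline).sub_const (f x)).sub
      (by simpa using (hasDerivAt_id t).smul_const (f' y v))
  have hg'_le : ∀ t ∈ Ico (0 : ℝ) 1, ‖g' t‖ ≤ L * ‖v‖ ^ 2 * (1 - t) := fun t ht => by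
    have hdist : y - (x + t • v) = (1 - t) • v := by simp only [v]; module
    calc ‖g' t‖ = ‖(f' y - f' (x + t • v)) v‖ := by
          rw [← norm_neg]; simp [g']
      _ ≤ L * ‖y - (x + t • v)‖ * ‖v‖ :=
          (ContinuousLinearMap.le_opNorm _ _).trans <| mul_le_mul_of_nonneg_right
            (hL _ (hseg t (Ico_subset_Icc_self ht))) (norm_nonneg v)
      _ = L * ‖v‖ ^ 2 * (1 - t) := by
          rw [hdist, norm_smul, Real.norm_of_nonneg (by linarith [ht.2])]; ring
  have hB : ∀ t, HasDerivAt (fun s : ℝ => L * ‖v‖ ^ 2 * (s - s ^ 2 / 2))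
      (L * ‖v‖ ^ 2 * (1 - t)) t := fun t => by
    simpa using (((hasDerivAt_id t).sub ((hasDerivAt_pow 2 t).div_const 2)).const_mul
      (L * ‖v‖ ^ 2))
  have hfence := image_norm_le_of_norm_deriv_right_le_deriv_boundary
    (fun t ht => (hg t ht).continuousAt.continuousWithinAt)
    (fun t ht => (hg t (Ico_subset_Icc_self ht)).hasDerivWithinAt)
    (by simp [g]) hB hg'_le (right_mem_Icc.2 zero_le_one)
  convert hfence using 1
  · simp only [g, one_smul, add_sub_cancel, v]
  · ring

theorem norm_newton_step_sub_le {F : E → G} (D : E →L[ℝ] G) (J : E ≃L[ℝ] G) {z zbar : E}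
    (hFzbar : F zbar = 0) :
    ‖z - J.symm (F z) - zbar‖ ≤ ‖(J.symm : G →L[ℝ] E).comp (D - (J : E →L[ℝ] G))‖ * ‖z - zbar‖
      + ‖J.symm (F z) - J.symm (F zbar) - J.symm (D (z - zbar))‖ := by
  have hsplit : z - J.symm (F z) - zbar =
      -((J.symm : G →L[ℝ] E).comp (D - (J : E →L[ℝ] G)) (z - zbar)
        + (J.symm (F z) - J.symm (F zbar) - J.symm (D (z - zbar)))) := by
    rw [ContinuousLinearMap.comp_sub, sub_apply]
    simp only [ContinuousLinearMap.comp_apply, ContinuousLinearEquiv.coe_coe,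
      ContinuousLinearEquiv.symm_apply_apply, hFzbar, map_zero]
    abel
  rw [hsplit, norm_neg]
  exact (norm_add_le _ _).trans (add_le_add_left (ContinuousLinearMap.le_opNorm _ _) _)

end

theorem newton_type_step_contraction_general (N : ℕ)
    (F : EuclideanSpace ℝ (Fin N) → EuclideanSpace ℝ (Fin N))
    (hF : ContDiff ℝ 1 F)
    (zbar : EuclideanSpace ℝ (Fin N)) (hFzbar : F zbar = 0)
    (J : EuclideanSpace ℝ (Fin N) → (EuclideanSpace ℝ (Fin N) ≃L[ℝ] EuclideanSpace ℝ (Fin N)))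
    (r : ℝ) (ω κ : ℝ)
    (hLip : ∀ z ∈ ball zbar r, ∀ z' ∈ ball zbar r,
      ‖((J z).symm : EuclideanSpace ℝ (Fin N) →L[ℝ] EuclideanSpace ℝ (Fin N)).comp
        (fderiv ℝ F z - fderiv ℝ F z')‖ ≤ ω * ‖z - z'‖)
    (hComp : ∀ z ∈ ball zbar r,
      ‖((J z).symm : EuclideanSpace ℝ (Fin N) →L[ℝ] EuclideanSpace ℝ (Fin N)).comp
        (fderiv ℝ F z - ((J z : EuclideanSpace ℝ (Fin N) →L[ℝ] EuclideanSpace ℝ (Fin N))))‖ ≤ κ)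
    (z : EuclideanSpace ℝ (Fin N)) (hz : z ∈ ball zbar r) :
    ‖(z - (J z).symm (F z)) - zbar‖ ≤ κ * ‖z - zbar‖ + ω / 2 * ‖z - zbar‖ ^ 2 := by
  have hseg : segment ℝ zbar z ⊆ ball zbar r :=
    (convex_ball zbar r).segment_subset (mem_ball_self (pos_of_mem_ball hz)) hz
  have hTaylor := norm_image_sub_sub_le_of_lipschitz_fderiv_segment
    (f := (J z).symm ∘ F)
    (f' := fun w => ((J z).symm : EuclideanSpace ℝ (Fin N) →L[ℝ] _).comp (fderiv ℝ F w))
    (fun w _ => (J z).symm.hasFDerivAt.comp w ((hF.differentiable one_ne_zero) w).hasFDerivAt)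
    (fun w hw => by rw [← ContinuousLinearMap.comp_sub]; exact hLip z hz w (hseg hw))
  exact (norm_newton_step_sub_le (fderiv ℝ F z) (J z) hFzbar).trans
    (add_le_add (mul_le_mul_of_nonneg_right (hComp z hz) (norm_nonneg _)) hTaylor)

/-- local contraction estimate for a single Newton-type step
`z⁺ = z − J(z)⁻¹ F(z)` under the Lipschitz and compatibility conditions. -/
theorem newton_type_step_contraction (N : ℕ)
    (F : EuclideanSpace ℝ (Fin N) → EuclideanSpace ℝ (Fin N))
    (hF : ContDiff ℝ 1 F)
    (zbar : EuclideanSpace ℝ (Fin N)) (hFzbar : F zbar = 0)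
    (J : EuclideanSpace ℝ (Fin N) → (EuclideanSpace ℝ (Fin N) ≃L[ℝ] EuclideanSpace ℝ (Fin N)))
    (r : ℝ) (hr : 0 < r) (ω κ : ℝ) (hκ : κ < 1)
    (hLip : ∀ z ∈ ball zbar r, ∀ z' ∈ ball zbar r,
      ‖((J z).symm : EuclideanSpace ℝ (Fin N) →L[ℝ] EuclideanSpace ℝ (Fin N)).comp
        (fderiv ℝ F z - fderiv ℝ F z')‖ ≤ ω * ‖z - z'‖)
    (hComp : ∀ z ∈ ball zbar r,
      ‖((J z).symm : EuclideanSpace ℝ (Fin N) →L[ℝ] EuclideanSpace ℝ (Fin N)).comp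
        (fderiv ℝ F z - ((J z : EuclideanSpace ℝ (Fin N) →L[ℝ] EuclideanSpace ℝ (Fin N))))‖ ≤ κ)
    (z : EuclideanSpace ℝ (Fin N)) (hz : z ∈ ball zbar r) :
    ‖(z - (J z).symm (F z)) - zbar‖ ≤ κ * ‖z - zbar‖ + ω / 2 * ‖z - zbar‖ ^ 2 :=
  newton_type_step_contraction_general N F hF zbar hFzbar J r ω κ hLip hComp z hz
end

section
/- Under the hypotheses of the Newton-type contraction bound, if additionally the initial iterate z₀ ∈ B satisfies ‖z₀ − z̄‖ < 2(1 − κ)/ω (with ω > 0), then the sequence defined by z_{l+1} = z_l − J(z_l)⁻¹F(z_l) remains in the ball of radius ‖z₀ − z̄‖ around z̄ and converges to z̄. -/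
/-!
Write `e = z - z̄` and `A = J(z)⁻¹`. Along the segment `γ t = z̄ + t e`, the error
`g t = γ t - A F(γ t) - z̄` of the Newton-type step vanishes at `t = 0` (as `F z̄ = 0`) and has
derivative `(I - A F'(γ t)) e`. Splitting `I - A F'(γ t) = A (F'(z) - F'(γ t)) - A (F'(z) - J(z))`
bounds its norm by `(κ + ω (1 - t) ‖e‖) ‖e‖`, which integrates to `(κ + ω ‖e‖ / 2) ‖e‖`. On the
ball of radius `R = ‖z₀ - z̄‖` the step therefore contracts the distance to `z̄` by
`q = κ + ω R / 2 < 1`, so the errors decay like `q ^ l R`.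
-/

open Metric Filter Set

section

variable {𝕜 : Type*} [NontriviallyNormedField 𝕜] {E F : Type*} [NormedAddCommGroup E]
  [NormedSpace 𝕜 E] [NormedAddCommGroup F] [NormedSpace 𝕜 F]

theorem ContinuousLinearEquiv.norm_id_sub_symm_comp_le (J : E ≃L[𝕜] F) (T T' : E →L[𝕜] F) :
    ‖ContinuousLinearMap.id 𝕜 E - (J.symm : F →L[𝕜] E).comp T‖ ≤
      ‖(J.symm : F →L[𝕜] E).comp (T' - T)‖ +
        ‖(J.symm : F →L[𝕜] E).comp (T' - (J : E →L[𝕜] F))‖ := by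
  have h : ContinuousLinearMap.id 𝕜 E - (J.symm : F →L[𝕜] E).comp T =
      (J.symm : F →L[𝕜] E).comp (T' - T) -
        (J.symm : F →L[𝕜] E).comp (T' - (J : E →L[𝕜] F)) := by
    rw [ContinuousLinearMap.comp_sub, ContinuousLinearMap.comp_sub,
      ContinuousLinearEquiv.coe_symm_comp_coe]
    abel
  rw [h]
  exact norm_sub_le _ _

end

section

variable {E : Type*} [NormedAddCommGroup E] [NormedSpace ℝ E]

def newtonTypeStep (F : E → E) (J : E → E ≃L[ℝ] E) (z : E) : E :=
  z - (J z).symm (F z)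

theorem norm_newtonTypeStep_sub_le {F : E → E} {J : E → E ≃L[ℝ] E} {s : Set E} {zbar z : E}
    {ω κ : ℝ} (hs : Convex ℝ s) (hF : ∀ w ∈ s, DifferentiableAt ℝ F w) (hzbar : zbar ∈ s)
    (hz : z ∈ s) (hFzbar : F zbar = 0)
    (hLip : ∀ w ∈ s, ‖((J z).symm : E →L[ℝ] E).comp (fderiv ℝ F z - fderiv ℝ F w)‖ ≤
      ω * ‖z - w‖)
    (hComp : ‖((J z).symm : E →L[ℝ] E).comp (fderiv ℝ F z - (J z : E →L[ℝ] E))‖ ≤ κ) :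
    ‖newtonTypeStep F J z - zbar‖ ≤ (κ + ω / 2 * ‖z - zbar‖) * ‖z - zbar‖ := by
  set A : E →L[ℝ] E := ((J z).symm : E →L[ℝ] E)
  set e := z - zbar
  set c := ‖e‖
  let γ : ℝ → E := fun t => zbar + t • e
  have hγs : ∀ t ∈ Icc (0 : ℝ) 1, γ t ∈ s := fun t ht =>
    by simpa [γ, e] using hs.add_smul_sub_mem hzbar hz ht
  have hγ : ∀ t, HasDerivAt γ e t := fun t => by
    simpa only [one_smul] using ((hasDerivAt_id' t).smul_const e).const_add zbar
  have hg : ∀ t ∈ Icc (0 : ℝ) 1, HasDerivAt (fun t => γ t - A (F (γ t)) - zbar)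
      ((ContinuousLinearMap.id ℝ E - A.comp (fderiv ℝ F (γ t))) e) t := fun t ht =>
    (((hasFDerivAt_id (γ t)).sub (A.hasFDerivAt.comp (γ t)
      (hF _ (hγs t ht)).hasFDerivAt)).comp_hasDerivAt t (hγ t)).sub_const zbar
  have hbound : ∀ t ∈ Ico (0 : ℝ) 1,
      ‖(ContinuousLinearMap.id ℝ E - A.comp (fderiv ℝ F (γ t))) e‖ ≤
        κ * c + ω * c ^ 2 * (1 - t) := by
    intro t ht
    have hzγ : ‖z - γ t‖ = (1 - t) * c := by
      rw [show z - γ t = (1 - t) • e by simp only [γ, e]; module, norm_smul,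
        Real.norm_of_nonneg (by linarith [ht.2])]
    calc _ ≤ ‖ContinuousLinearMap.id ℝ E - A.comp (fderiv ℝ F (γ t))‖ * c :=
          ContinuousLinearMap.le_opNorm _ _
      _ ≤ (ω * ((1 - t) * c) + κ) * c := by
          gcongr
          refine ((J z).norm_id_sub_symm_comp_le _ (fderiv ℝ F z)).trans (add_le_add ?_ hComp)
          exact hzγ ▸ hLip _ (hγs t (Ico_subset_Icc_self ht))
      _ = κ * c + ω * c ^ 2 * (1 - t) := by ring
  have hB : ∀ t : ℝ, HasDerivAt (fun t => κ * c * t + ω * c ^ 2 * (t - t ^ 2 / 2))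
      (κ * c + ω * c ^ 2 * (1 - t)) t := fun t =>
    (((hasDerivAt_id' t).const_mul (κ * c)).add (((hasDerivAt_id' t).sub
      ((hasDerivAt_pow 2 t).div_const 2)).const_mul (ω * c ^ 2))).congr_deriv (by norm_num)
  have key := image_norm_le_of_norm_deriv_right_le_deriv_boundary
    (fun t ht => (hg t ht).continuousAt.continuousWithinAt)
    (fun t ht => (hg t (Ico_subset_Icc_self ht)).hasDerivWithinAt)
    (by simp [γ, hFzbar]) hB hbound (right_mem_Icc.2 zero_le_one)
  calc _ = ‖γ 1 - A (F (γ 1)) - zbar‖ := by simp [γ, e, newtonTypeStep, A]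
    _ ≤ _ := key
    _ = _ := by ring

end

theorem dist_le_pow_mul_of_forall_dist_le {X : Type*} [PseudoMetricSpace X] {T : X → X}
    {x : X} {R q : ℝ} (hq0 : 0 ≤ q) (hq1 : q ≤ 1)
    (hT : ∀ z, dist z x ≤ R → dist (T z) x ≤ q * dist z x) {u : ℕ → X} (hu0 : dist (u 0) x ≤ R)
    (hu : ∀ l, u (l + 1) = T (u l)) (l : ℕ) : dist (u l) x ≤ q ^ l * dist (u 0) x := by
  induction l with
  | zero => simp
  | succ l ih =>
    have hR : dist (u l) x ≤ R :=
      ih.trans ((mul_le_of_le_one_left dist_nonneg (pow_le_one₀ hq0 hq1)).trans hu0)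
    calc dist (u (l + 1)) x ≤ q * dist (u l) x := hu l ▸ hT _ hR
      _ ≤ q * (q ^ l * dist (u 0) x) := by gcongr
      _ = q ^ (l + 1) * dist (u 0) x := by ring

theorem newton_type_iterates_converge_general (N : ℕ)
    (F : EuclideanSpace ℝ (Fin N) → EuclideanSpace ℝ (Fin N))
    (hF : ContDiff ℝ 1 F)
    (zbar : EuclideanSpace ℝ (Fin N)) (hFzbar : F zbar = 0)
    (J : EuclideanSpace ℝ (Fin N) → (EuclideanSpace ℝ (Fin N) ≃L[ℝ] EuclideanSpace ℝ (Fin N)))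
    (r : ℝ) (ω κ : ℝ) (hκ0 : 0 ≤ κ) (hω : 0 < ω)
    (hLip : ∀ z ∈ ball zbar r, ∀ z' ∈ ball zbar r,
      ‖((J z).symm : EuclideanSpace ℝ (Fin N) →L[ℝ] EuclideanSpace ℝ (Fin N)).comp
        (fderiv ℝ F z - fderiv ℝ F z')‖ ≤ ω * ‖z - z'‖)
    (hComp : ∀ z ∈ ball zbar r,
      ‖((J z).symm : EuclideanSpace ℝ (Fin N) →L[ℝ] EuclideanSpace ℝ (Fin N)).comp
        (fderiv ℝ F z - ((J z : EuclideanSpace ℝ (Fin N) →L[ℝ] EuclideanSpace ℝ (Fin N))))‖ ≤ κ)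
    (z0 : EuclideanSpace ℝ (Fin N))
    (hz0 : ‖z0 - zbar‖ < 2 * (1 - κ) / ω)
    (hball : closedBall zbar ‖z0 - zbar‖ ⊆ ball zbar r)
    (zseq : ℕ → EuclideanSpace ℝ (Fin N))
    (hinit : zseq 0 = z0)
    (hstep : ∀ l : ℕ, zseq (l + 1) = zseq l - (J (zseq l)).symm (F (zseq l))) :
    (∀ l : ℕ, ‖zseq l - zbar‖ ≤ ‖z0 - zbar‖) ∧
      Tendsto zseq atTop (nhds zbar) := by
  set R := ‖z0 - zbar‖
  set q := κ + ω / 2 * R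
  have hq0 : 0 ≤ q := by positivity
  have hq1 : q < 1 := by
    have := (lt_div_iff₀ hω).1 hz0
    show κ + ω / 2 * R < 1
    linarith
  have hcontract : ∀ z, dist z zbar ≤ R → dist (newtonTypeStep F J z) zbar ≤ q * dist z zbar := by
    intro z hz
    simp only [dist_eq_norm] at hz ⊢
    have hzR : z ∈ closedBall zbar R := mem_closedBall_iff_norm.2 hz
    refine (norm_newtonTypeStep_sub_le (convex_closedBall zbar R)
      (fun w _ => (hF.differentiable one_ne_zero).differentiableAt)
      (mem_closedBall_self (norm_nonneg _)) hzR hFzbar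
      (fun w hw => hLip z (hball hzR) w (hball hw)) (hComp z (hball hzR))).trans ?_
    show _ ≤ (κ + ω / 2 * R) * _
    gcongr
  have hdist : ∀ l, dist (zseq l) zbar ≤ q ^ l * R := by
    simpa [hinit, dist_eq_norm] using dist_le_pow_mul_of_forall_dist_le hq0 hq1.le hcontract
      (by rw [hinit, dist_eq_norm]) hstep
  refine ⟨fun l => ?_, ?_⟩
  · simpa [dist_eq_norm] using
      (hdist l).trans (mul_le_of_le_one_left (norm_nonneg _) (pow_le_one₀ hq0 hq1.le))
  · refine tendsto_iff_dist_tendsto_zero.2 (squeeze_zero (fun _ => dist_nonneg) hdist ?_)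
    simpa using (tendsto_pow_atTop_nhds_zero_of_lt_one hq0 hq1).mul_const R

/-- Under the Newton-type contraction hypotheses, if the initial iterate
satisfies `‖z₀ − z̄‖ < 2(1 − κ)/ω`, the Newton-type sequence stays in the ball of
radius `‖z₀ − z̄‖` around `z̄` and converges to `z̄`. -/
theorem newton_type_iterates_converge (N : ℕ)
    (F : EuclideanSpace ℝ (Fin N) → EuclideanSpace ℝ (Fin N))
    (hF : ContDiff ℝ 1 F)
    (zbar : EuclideanSpace ℝ (Fin N)) (hFzbar : F zbar = 0)
    (J : EuclideanSpace ℝ (Fin N) → (EuclideanSpace ℝ (Fin N) ≃L[ℝ] EuclideanSpace ℝ (Fin N)))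
    (r : ℝ) (hr : 0 < r) (ω κ : ℝ) (hκ0 : 0 ≤ κ) (hκ : κ < 1) (hω : 0 < ω)
    (hLip : ∀ z ∈ ball zbar r, ∀ z' ∈ ball zbar r,
      ‖((J z).symm : EuclideanSpace ℝ (Fin N) →L[ℝ] EuclideanSpace ℝ (Fin N)).comp
        (fderiv ℝ F z - fderiv ℝ F z')‖ ≤ ω * ‖z - z'‖)
    (hComp : ∀ z ∈ ball zbar r,
      ‖((J z).symm : EuclideanSpace ℝ (Fin N) →L[ℝ] EuclideanSpace ℝ (Fin N)).comp
        (fderiv ℝ F z - ((J z : EuclideanSpace ℝ (Fin N) →L[ℝ] EuclideanSpace ℝ (Fin N))))‖ ≤ κ)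
    (z0 : EuclideanSpace ℝ (Fin N))
    (hz0 : ‖z0 - zbar‖ < 2 * (1 - κ) / ω)
    (hball : closedBall zbar ‖z0 - zbar‖ ⊆ ball zbar r)
    (zseq : ℕ → EuclideanSpace ℝ (Fin N))
    (hinit : zseq 0 = z0)
    (hstep : ∀ l : ℕ, zseq (l + 1) = zseq l - (J (zseq l)).symm (F (zseq l))) :
    (∀ l : ℕ, ‖zseq l - zbar‖ ≤ ‖z0 - zbar‖) ∧
      Tendsto zseq atTop (nhds zbar) :=
  newton_type_iterates_converge_general N F hF zbar hFzbar J r ω κ hκ0 hω hLip hComp z0 hz0 hball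
    zseq hinit hstep
end

section
/- Let e_l := ‖z_l − z̄‖ be a sequence of nonnegative reals satisfying e_{l+1} ≤ κ e_l + (ω/2) e_l², with 0 ≤ κ < 1, ω ≥ 0, and e₀ < 2(1 − κ)/ω. Then e_l is nonincreasing and converges to 0. -/
open Filter

/-- A nonnegative real sequence satisfying the contraction recursion
`e_{l+1} ≤ κ e_l + (ω/2) e_l²` with `0 ≤ κ < 1`, `ω > 0` and `e₀ < 2(1 − κ)/ω`
is nonincreasing and converges to `0`. -/
theorem contraction_recursion_tendsto_zero
    (e : ℕ → ℝ) (κ ω : ℝ)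
    (hpos : ∀ l, 0 ≤ e l)
    (hκ0 : 0 ≤ κ) (hκ : κ < 1) (hω : 0 < ω)
    (hrec : ∀ l, e (l + 1) ≤ κ * e l + ω / 2 * (e l) ^ 2)
    (he0 : e 0 < 2 * (1 - κ) / ω) :
    (∀ l, e (l + 1) ≤ e l) ∧ Tendsto e atTop (nhds 0) := by
  set q : ℝ := κ + ω / 2 * e 0 with hqdef
  have hq0 : 0 ≤ q := by have := hpos 0; rw [hqdef]; positivity
  have hq1 : q < 1 := by
    have h := (lt_div_iff₀ hω).mp he0
    rw [hqdef]; nlinarith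
  have hle0 : ∀ l, e l ≤ e 0 := by
    intro l
    induction l with
    | zero => exact le_refl _
    | succ n ih =>
      have h := hrec n
      have h1 : e n ^ 2 ≤ e n * e 0 := by nlinarith [hpos n]
      have h2 : (κ + ω / 2 * e 0) * e n ≤ 1 * e n :=
        mul_le_mul_of_nonneg_right (by rw [← hqdef]; exact hq1.le) (hpos n)
      nlinarith [hpos n]
  have hstep : ∀ l, e (l + 1) ≤ q * e l := by
    intro l
    have h := hrec l
    have h1 : e l ^ 2 ≤ e l * e 0 := by nlinarith [hpos l, hle0 l]
    rw [hqdef]; nlinarith [hpos l]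
  have hmono : ∀ l, e (l + 1) ≤ e l := by
    intro l
    calc e (l + 1) ≤ q * e l := hstep l
    _ ≤ 1 * e l := by nlinarith [hpos l]
    _ = e l := one_mul _
  refine ⟨hmono, ?_⟩
  have hgeo : ∀ l, e l ≤ q ^ l * e 0 := by
    intro l
    induction l with
    | zero => simp
    | succ n ih =>
      calc e (n + 1) ≤ q * e n := hstep n
      _ ≤ q * (q ^ n * e 0) := by nlinarith [hpos n, pow_nonneg hq0 n]
      _ = q ^ (n + 1) * e 0 := by ring
  have htend : Tendsto (fun l => q ^ l * e 0) atTop (nhds 0) := by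
    simpa using (tendsto_pow_atTop_nhds_zero_of_lt_one hq0 hq1).mul_const (e 0)
  exact squeeze_zero hpos hgeo htend
end
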